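/- arXiv:2004.01345 — 5 statements merged into one kernel-verified Lean document; each statement's English description precedes it below -/
import Mathlib

section
/- Let (V_N) be a sequence of positive reals that is slowly varying in the sense of Karamata (i.e., V_{⌊λN⌋}/V_N → 1 as N → ∞ for every λ > 0) and diverges to infinity. Then there exists a sequence of positive integers M_N tending to infinity such that V_{⌊N·M_N⌋}/V_N → 1 and V_N/V_{⌊N/M_N⌋} → 1 as N → ∞. -/
open Filter Topology

/-!
Diagonal argument: for each fixed `k`, slow variation with `λ = k + 1` and `λ = 1 / (k + 1)`
gives `V_{N(k+1)} / V_N → 1` and `V_N / V_{⌊N/(k+1)⌋} → 1`. Taking `M_N - 1` to be the largest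
`k ≤ N` for which both ratios lie in the `k`-th member of an antitone basis of `𝓝 1` makes
`M_N → ∞` slowly enough for both ratios to still tend to `1`.
-/

theorem exists_tendsto_atTop_eventually_diag {P : ℕ → ℕ → Prop}
    (h : ∀ k, ∀ᶠ n in atTop, P k n) :
    ∃ φ : ℕ → ℕ, Tendsto φ atTop atTop ∧ ∀ᶠ n in atTop, P (φ n) n := by
  classical
  refine ⟨fun n => Nat.findGreatest (P · n) n, tendsto_atTop.2 fun k => ?_, ?_⟩
  · filter_upwards [h k, eventually_ge_atTop k] with n hkn hk
    exact Nat.le_findGreatest hk hkn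
  · filter_upwards [h 0] with n h0n
    exact Nat.findGreatest_spec (P := (P · n)) (Nat.zero_le n) h0n

theorem exists_tendsto_atTop_tendsto_diag {α : Type*} {l : Filter α} [l.IsCountablyGenerated]
    {u : ℕ → ℕ → α} (h : ∀ k, Tendsto (u k) atTop l) :
    ∃ φ : ℕ → ℕ, Tendsto φ atTop atTop ∧ Tendsto (fun n => u (φ n) n) atTop l := by
  obtain ⟨s, hs⟩ := l.exists_antitone_basis
  obtain ⟨φ, hφ, hφs⟩ :=
    exists_tendsto_atTop_eventually_diag fun k => (h k).eventually (hs.mem k)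
  refine ⟨φ, hφ, hs.tendsto_right_iff.2 fun i _ => ?_⟩
  filter_upwards [hφs, hφ.eventually_ge_atTop i] with n hn hin
  exact hs.antitone hin hn

def IsSlowlyVarying (V : ℕ → ℝ) : Prop :=
  ∀ l : ℝ, 0 < l → Tendsto (fun N : ℕ => V ⌊l * N⌋₊ / V N) atTop (𝓝 1)

namespace IsSlowlyVarying

variable {V : ℕ → ℝ}

theorem tendsto_mul_nat (hV : IsSlowlyVarying V) {m : ℕ} (hm : 0 < m) :
    Tendsto (fun n => V (n * m) / V n) atTop (𝓝 1) := by
  refine (hV m (Nat.cast_pos.2 hm)).congr fun n => ?_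
  rw [← Nat.cast_mul, Nat.floor_natCast, mul_comm]

theorem tendsto_div_nat (hV : IsSlowlyVarying V) {m : ℕ} (hm : 0 < m) :
    Tendsto (fun n => V n / V (n / m)) atTop (𝓝 1) := by
  have h := (hV (m : ℝ)⁻¹ (inv_pos.2 (Nat.cast_pos.2 hm))).inv₀ one_ne_zero
  rw [inv_one] at h
  refine h.congr fun n => ?_
  rw [inv_mul_eq_div, Nat.floor_div_natCast, Nat.floor_natCast, inv_div]

end IsSlowlyVarying

theorem exists_slowly_growing_M_general
    (V : ℕ → ℝ)
    (hslow : ∀ l : ℝ, 0 < l →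
      Tendsto (fun N : ℕ => V ⌊l * N⌋₊ / V N) atTop (nhds 1)) :
    ∃ M : ℕ → ℕ, (∀ N, 0 < M N) ∧ Tendsto M atTop atTop ∧
      Tendsto (fun N => V (N * M N) / V N) atTop (nhds 1) ∧
      Tendsto (fun N => V N / V (N / M N)) atTop (nhds 1) := by
  have hV : IsSlowlyVarying V := hslow
  obtain ⟨φ, hφ, hlim⟩ := exists_tendsto_atTop_tendsto_diag fun k =>
    (hV.tendsto_mul_nat k.succ_pos).prodMk_nhds (hV.tendsto_div_nat k.succ_pos)
  exact ⟨fun N => φ N + 1, fun N => (φ N).succ_pos, (tendsto_add_atTop_nat 1).comp hφ,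
    (continuous_fst.tendsto _).comp hlim, (continuous_snd.tendsto _).comp hlim⟩

/-- A positive sequence `V` slowly varying in the sense of Karamata and diverging to
infinity admits a sequence `M_N → ∞` of positive integers such that
`V_{N·M_N}/V_N → 1` and `V_N/V_{⌊N/M_N⌋} → 1`. -/
theorem exists_slowly_growing_M
    (V : ℕ → ℝ) (hpos : ∀ N, 0 < V N)
    (hslow : ∀ l : ℝ, 0 < l →
      Tendsto (fun N : ℕ => V ⌊l * N⌋₊ / V N) atTop (nhds 1))
    (hdiv : Tendsto V atTop atTop) :
    ∃ M : ℕ → ℕ, (∀ N, 0 < M N) ∧ Tendsto M atTop atTop ∧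
      Tendsto (fun N => V (N * M N) / V N) atTop (nhds 1) ∧
      Tendsto (fun N => V N / V (N / M N)) atTop (nhds 1) :=
  exists_slowly_growing_M_general V hslow
end

section
/- Let (c_k)_{k≥1} be nonnegative reals and set V_N = 2·∑_{k=1}^N k²·c_k². Assume V_N is slowly varying in the sense of Karamata and V_N → ∞. Then ∑_{1 ≤ s,t ≤ N, s+t ≥ N+1} s·c_s·c_t = o(V_N) as N → ∞. -/
open Filter Finset

/-!
Put `b_k = k c_k`, `P_N = ∑_{k ≤ N} b_k²` and `Q_N = ∑_{N/2 < k ≤ N} b_k²`, so that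
`V_N = 2 P_N`. The off-diagonal sum is `∑_s b_s A_s` with the tails
`A_s = ∑_{N+1-s ≤ t ≤ N} c_t`, and its square is at most `16 P_N Q_N`: over `s > N/2` by
Cauchy–Schwarz against Copson's inequality `∑_m (∑_{k ≥ m} c_k)² ≤ 4 ∑_k (k c_k)²`, and over
`s ≤ N/2` because then only `t > N/2` occur, where `c_t ≤ 2 b_t / N`. Slow variation at
`λ = 1/2` says `P_{N/2} / P_N → 1`, i.e. `Q_N = o(P_N)`.
-/

theorem sum_Icc_natCast_mul_sub {R : Type*} [CommRing R] (F : ℕ → R) (n : ℕ) :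
    ∑ k ∈ Icc 1 n, (k : R) * (F k - F (k + 1)) = ∑ k ∈ Icc 1 n, F k - n * F (n + 1) := by
  induction n with
  | zero => simp
  | succ n ih =>
    rw [sum_Icc_succ_top (by omega), sum_Icc_succ_top (by omega), ih]
    push_cast
    ring

theorem sum_Icc_eq_add_sum_Icc_succ {M : Type*} [AddCommMonoid M] (f : ℕ → M) {m n : ℕ}
    (h : m ≤ n) : ∑ k ∈ Icc m n, f k = f m + ∑ k ∈ Icc (m + 1) n, f k := by
  rw [Icc_eq_cons_Ioc h, sum_cons, Icc_add_one_left_eq_Ioc]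

theorem sum_Icc_one_eq_add_sum_Ioc {M : Type*} [AddCommMonoid M] (f : ℕ → M) {m n : ℕ}
    (h : m ≤ n) : ∑ k ∈ Icc 1 n, f k = ∑ k ∈ Icc 1 m, f k + ∑ k ∈ Ioc m n, f k := by
  have hIcc : ∀ k, Icc 1 k = Ioc 0 k := fun k => Icc_add_one_left_eq_Ioc 0 k
  rw [hIcc, hIcc, sum_Ioc_consecutive f m.zero_le h]

/-- Copson's inequality. For the tails `A_m`, Abel summation gives
`∑ A_m² = ∑ k (A_k² - A_{k+1}²) ≤ 2 ∑ k c_k A_k`, and Cauchy–Schwarz bounds the right side. -/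
theorem sum_sq_sum_Icc_le (c : ℕ → ℝ) (hc : ∀ k, 0 ≤ c k) (n : ℕ) :
    ∑ m ∈ Icc 1 n, (∑ k ∈ Icc m n, c k) ^ 2 ≤ 4 * ∑ k ∈ Icc 1 n, ((k : ℝ) * c k) ^ 2 := by
  set A : ℕ → ℝ := fun m => ∑ k ∈ Icc m n, c k
  have hA_nonneg : ∀ m, 0 ≤ A m := fun m => sum_nonneg fun k _ => hc k
  have hA_step : ∀ m ∈ Icc 1 n, A m = c m + A (m + 1) := fun m hm =>
    sum_Icc_eq_add_sum_Icc_succ c (mem_Icc.1 hm).2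
  set S := ∑ m ∈ Icc 1 n, A m ^ 2
  set X := ∑ k ∈ Icc 1 n, (k : ℝ) * c k * A k
  have hS_abel : S = ∑ k ∈ Icc 1 n, (k : ℝ) * (A k ^ 2 - A (k + 1) ^ 2) := by
    simp [sum_Icc_natCast_mul_sub, S, A]
  have hS_le : S ≤ 2 * X := by
    rw [hS_abel, mul_sum]
    refine sum_le_sum fun k hk => ?_
    rw [hA_step k hk]
    nlinarith [hc k, hA_nonneg (k + 1),
      mul_nonneg (Nat.cast_nonneg (α := ℝ) k) (sq_nonneg (c k))]
  have hX : X ^ 2 ≤ (∑ k ∈ Icc 1 n, ((k : ℝ) * c k) ^ 2) * S := sum_mul_sq_le_sq_mul_sq _ _ _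
  have hS_nonneg : 0 ≤ S := sum_nonneg fun m _ => sq_nonneg _
  have hS_sq : S * S ≤ 4 * (∑ k ∈ Icc 1 n, ((k : ℝ) * c k) ^ 2) * S := by
    nlinarith [mul_self_le_mul_self hS_nonneg hS_le]
  rcases hS_nonneg.eq_or_lt with hS0 | hS_pos
  · rw [← hS0]
    positivity
  · exact le_of_mul_le_mul_right hS_sq hS_pos

theorem sum_sq_sum_Icc_sub_le (c : ℕ → ℝ) (hc : ∀ k, 0 ≤ c k) (n : ℕ) :
    ∑ s ∈ Icc 1 n, (∑ t ∈ Icc (n + 1 - s) n, c t) ^ 2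
      ≤ 4 * ∑ k ∈ Icc 1 n, ((k : ℝ) * c k) ^ 2 :=
  calc _ = ∑ m ∈ Icc 1 n, (∑ k ∈ Icc m n, c k) ^ 2 := by
        refine sum_nbij' (fun s => n + 1 - s) (fun m => n + 1 - m) ?_ ?_ ?_ ?_ fun _ _ => rfl <;>
          intro s hs <;> simp only [mem_Icc] at hs ⊢ <;> omega
    _ ≤ _ := sum_sq_sum_Icc_le c hc n

theorem offdiag_sum_eq (c : ℕ → ℝ) (N : ℕ) :
    ∑ s ∈ Icc 1 N, ∑ t ∈ Icc 1 N, (if N + 1 ≤ s + t then (s : ℝ) * c s * c t else 0)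
      = ∑ s ∈ Icc 1 N, (s : ℝ) * c s * ∑ t ∈ Icc (N + 1 - s) N, c t := by
  refine sum_congr rfl fun s hs => ?_
  rw [← sum_filter, mul_sum]
  congr 1
  ext t
  simp only [mem_filter, mem_Icc] at hs ⊢
  omega

theorem natCast_mul_sum_Icc_half_mul_tail_le (c : ℕ → ℝ) (hc : ∀ k, 0 ≤ c k) (N : ℕ) :
    (N : ℝ) * ∑ s ∈ Icc 1 (N / 2), (s : ℝ) * c s * ∑ t ∈ Icc (N + 1 - s) N, c t
      ≤ 2 * (∑ s ∈ Icc 1 N, (s : ℝ) * c s) * ∑ t ∈ Ioc (N / 2) N, (t : ℝ) * c t := by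
  have hb : ∀ k : ℕ, 0 ≤ (k : ℝ) * c k := fun k => mul_nonneg k.cast_nonneg (hc k)
  set B := ∑ s ∈ Icc 1 N, (s : ℝ) * c s
  have hB_nonneg : 0 ≤ B := sum_nonneg fun s _ => hb s
  have hR_nonneg : 0 ≤ ∑ t ∈ Ioc (N / 2) N, c t := sum_nonneg fun t _ => hc t
  calc _ ≤ N * ∑ s ∈ Icc 1 (N / 2), (s : ℝ) * c s * ∑ t ∈ Ioc (N / 2) N, c t := by
        refine mul_le_mul_of_nonneg_left (sum_le_sum fun s hs => ?_) N.cast_nonneg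
        refine mul_le_mul_of_nonneg_left
          (sum_le_sum_of_subset_of_nonneg ?_ fun t _ _ => hc t) (hb s)
        intro t ht
        simp only [mem_Icc, mem_Ioc] at hs ht ⊢
        omega
    _ ≤ N * (B * ∑ t ∈ Ioc (N / 2) N, c t) := by
        rw [← sum_mul]
        refine mul_le_mul_of_nonneg_left (mul_le_mul_of_nonneg_right ?_ hR_nonneg) N.cast_nonneg
        exact sum_le_sum_of_subset_of_nonneg (Icc_subset_Icc_right (Nat.div_le_self N 2))
          fun s _ _ => hb s
    _ = B * ∑ t ∈ Ioc (N / 2) N, (N : ℝ) * c t := by rw [← mul_sum]; ring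
    _ ≤ B * ∑ t ∈ Ioc (N / 2) N, 2 * ((t : ℝ) * c t) := by
        refine mul_le_mul_of_nonneg_left (sum_le_sum fun t ht => ?_) hB_nonneg
        have hNt : (N : ℝ) ≤ 2 * t := by
          have := (mem_Ioc.1 ht).1
          exact_mod_cast (by omega : N ≤ 2 * t)
        nlinarith [hc t]
    _ = _ := by rw [← mul_sum]; ring

theorem sq_sum_Icc_half_mul_tail_le (c : ℕ → ℝ) (hc : ∀ k, 0 ≤ c k) (N : ℕ) :
    (∑ s ∈ Icc 1 (N / 2), (s : ℝ) * c s * ∑ t ∈ Icc (N + 1 - s) N, c t) ^ 2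
      ≤ 4 * (∑ k ∈ Icc 1 N, ((k : ℝ) * c k) ^ 2)
        * ∑ k ∈ Ioc (N / 2) N, ((k : ℝ) * c k) ^ 2 := by
  rcases Nat.eq_zero_or_pos N with rfl | hN
  · simp
  set L := ∑ s ∈ Icc 1 (N / 2), (s : ℝ) * c s * ∑ t ∈ Icc (N + 1 - s) N, c t
  set B := ∑ s ∈ Icc 1 N, (s : ℝ) * c s
  set C := ∑ t ∈ Ioc (N / 2) N, (t : ℝ) * c t
  have hL_nonneg : 0 ≤ L :=
    sum_nonneg fun s _ =>
      mul_nonneg (mul_nonneg s.cast_nonneg (hc s)) (sum_nonneg fun t _ => hc t)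
  have hB : B ^ 2 ≤ N * ∑ k ∈ Icc 1 N, ((k : ℝ) * c k) ^ 2 := by
    simpa using sq_sum_le_card_mul_sum_sq (s := Icc 1 N) (f := fun k => (k : ℝ) * c k)
  have hC : C ^ 2 ≤ N * ∑ k ∈ Ioc (N / 2) N, ((k : ℝ) * c k) ^ 2 := by
    refine sq_sum_le_card_mul_sum_sq.trans ?_
    gcongr
    simp
  have hNL : ((N : ℝ) * L) ^ 2 ≤ N ^ 2 * (4 * (∑ k ∈ Icc 1 N, ((k : ℝ) * c k) ^ 2)
      * ∑ k ∈ Ioc (N / 2) N, ((k : ℝ) * c k) ^ 2) :=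
    calc _ ≤ (2 * B * C) ^ 2 :=
          pow_le_pow_left₀ (by positivity) (natCast_mul_sum_Icc_half_mul_tail_le c hc N) 2
      _ = 4 * B ^ 2 * C ^ 2 := by ring
      _ ≤ 4 * (N * ∑ k ∈ Icc 1 N, ((k : ℝ) * c k) ^ 2)
          * (N * ∑ k ∈ Ioc (N / 2) N, ((k : ℝ) * c k) ^ 2) := by gcongr
      _ = _ := by ring
  rw [mul_pow] at hNL
  exact le_of_mul_le_mul_left hNL (by positivity)

theorem offdiag_sum_sq_le (c : ℕ → ℝ) (hc : ∀ k, 0 ≤ c k) (N : ℕ) :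
    (∑ s ∈ Icc 1 N, ∑ t ∈ Icc 1 N, if N + 1 ≤ s + t then (s : ℝ) * c s * c t else 0) ^ 2
      ≤ 16 * (∑ k ∈ Icc 1 N, ((k : ℝ) * c k) ^ 2)
        * ∑ k ∈ Ioc (N / 2) N, ((k : ℝ) * c k) ^ 2 := by
  set P := ∑ k ∈ Icc 1 N, ((k : ℝ) * c k) ^ 2
  set Q := ∑ k ∈ Ioc (N / 2) N, ((k : ℝ) * c k) ^ 2
  set A : ℕ → ℝ := fun s => ∑ t ∈ Icc (N + 1 - s) N, c t
  set L := ∑ s ∈ Icc 1 (N / 2), (s : ℝ) * c s * A s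
  set H := ∑ s ∈ Ioc (N / 2) N, (s : ℝ) * c s * A s
  rw [offdiag_sum_eq, sum_Icc_one_eq_add_sum_Ioc _ (Nat.div_le_self N 2)]
  have hlow : L ^ 2 ≤ 4 * P * Q := sq_sum_Icc_half_mul_tail_le c hc N
  have hhigh : H ^ 2 ≤ 4 * P * Q :=
    calc _ ≤ Q * ∑ s ∈ Ioc (N / 2) N, A s ^ 2 :=
          sum_mul_sq_le_sq_mul_sq (Ioc (N / 2) N) (fun s => (s : ℝ) * c s) A
      _ ≤ Q * ∑ s ∈ Icc 1 N, A s ^ 2 := by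
          gcongr
          intro s hs
          simp only [mem_Icc, mem_Ioc] at hs ⊢
          omega
      _ ≤ Q * (4 * P) := by gcongr; exact sum_sq_sum_Icc_sub_le c hc N
      _ = 4 * P * Q := by ring
  nlinarith [sq_nonneg (L - H)]

theorem eventually_sub_le_mul_of_tendsto_div {α : Type*} {l : Filter α} {u v : α → ℝ}
    (h : Tendsto (fun x => u x / v x) l (nhds 1)) (hv : ∀ᶠ x in l, 0 ≤ v x) {δ : ℝ}
    (hδ : 0 < δ) :
    ∀ᶠ x in l, v x - u x ≤ δ * v x := by
  filter_upwards [h.eventually (lt_mem_nhds (sub_lt_self 1 hδ)), h.eventually_ne one_ne_zero, hv]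
    with x hlt hne hvx
  rw [lt_div_iff₀ (hvx.lt_of_ne' (div_ne_zero_iff.1 hne).2)] at hlt
  linarith

theorem offdiag_sum_isLittleO_one_general
    (c : ℕ → ℝ) (hc : ∀ k, 0 ≤ c k)
    (V : ℕ → ℝ) (hV : ∀ N, V N = 2 * ∑ k ∈ Icc 1 N, (k : ℝ) ^ 2 * c k ^ 2)
    (hslow : ∀ l : ℝ, 0 < l →
      Tendsto (fun N : ℕ => V ⌊l * N⌋₊ / V N) atTop (nhds 1)) :
    (fun N : ℕ => ∑ s ∈ Icc 1 N, ∑ t ∈ Icc 1 N,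
        if N + 1 ≤ s + t then (s : ℝ) * c s * c t else 0) =o[atTop] V := by
  set P : ℕ → ℝ := fun N => ∑ k ∈ Icc 1 N, ((k : ℝ) * c k) ^ 2
  have hVP : ∀ N, V N = 2 * P N := fun N => by simp [hV, P, mul_pow]
  have hV_nonneg : ∀ N, 0 ≤ V N := fun N => by rw [hVP]; positivity
  have hhalf : Tendsto (fun N : ℕ => V (N / 2) / V N) atTop (nhds 1) := by
    have hfloor : ∀ N : ℕ, ⌊(1 / 2 : ℝ) * N⌋₊ = N / 2 := fun N => by
      rw [one_div_mul_eq_div, Nat.floor_div_ofNat, Nat.floor_natCast]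
    simpa only [hfloor] using hslow (1 / 2) one_half_pos
  refine Asymptotics.isLittleO_iff.2 fun ε hε => ?_
  filter_upwards [eventually_sub_le_mul_of_tendsto_div hhalf (Eventually.of_forall hV_nonneg)
    (show 0 < ε ^ 2 / 4 by positivity)] with N hN
  have hT_nonneg : 0 ≤ ∑ s ∈ Icc 1 N, ∑ t ∈ Icc 1 N,
      if N + 1 ≤ s + t then (s : ℝ) * c s * c t else 0 :=
    sum_nonneg fun s _ => sum_nonneg fun t _ => by
      have := hc s; have := hc t; split_ifs <;> positivity
  rw [Real.norm_of_nonneg hT_nonneg, Real.norm_of_nonneg (hV_nonneg N)]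
  refine (pow_le_pow_iff_left₀ hT_nonneg (mul_nonneg hε.le (hV_nonneg N)) two_ne_zero).1 ?_
  have hQ : ∑ k ∈ Ioc (N / 2) N, ((k : ℝ) * c k) ^ 2 = P N - P (N / 2) := by
    simp only [P, sum_Icc_one_eq_add_sum_Ioc _ (Nat.div_le_self N 2), add_sub_cancel_left]
  calc _ ≤ 16 * P N * (P N - P (N / 2)) := hQ ▸ offdiag_sum_sq_le c hc N
    _ ≤ 16 * P N * (ε ^ 2 / 4 * P N) := by
        gcongr
        rw [hVP, hVP] at hN
        linarith
    _ = (ε * V N) ^ 2 := by rw [hVP]; ring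

/-- Lemma 2.1 (i): if `V_N = 2∑_{k=1}^N k²c_k²` is slowly varying (Karamata) and
diverges, then `∑_{1≤s,t≤N, s+t≥N+1} s·c_s·c_t = o(V_N)`. -/
theorem offdiag_sum_isLittleO_one
    (c : ℕ → ℝ) (hc : ∀ k, 0 ≤ c k)
    (V : ℕ → ℝ) (hV : ∀ N, V N = 2 * ∑ k ∈ Icc 1 N, (k : ℝ) ^ 2 * c k ^ 2)
    (hslow : ∀ l : ℝ, 0 < l →
      Tendsto (fun N : ℕ => V ⌊l * N⌋₊ / V N) atTop (nhds 1))
    (hdiv : Tendsto V atTop atTop) :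
    (fun N : ℕ => ∑ s ∈ Icc 1 N, ∑ t ∈ Icc 1 N,
        if N + 1 ≤ s + t then (s : ℝ) * c s * c t else 0) =o[atTop] V :=
  offdiag_sum_isLittleO_one_general c hc V hV hslow
end

section
/- Let (c_k)_{k≥1} be nonnegative reals whose partial sums V_N = 2·∑_{k=1}^N k²c_k² are slowly varying (Karamata) with V_N → ∞. Then (N+1)·∑_{s ≥ N+1, 1 ≤ t ≤ N, s−t ≤ N} c_s·c_t = o(V_N) as N → ∞. -/
open Filter Finset

/-- Telescoping sum over `Icc a b`. -/
lemma tel_Icc (f : ℕ → ℝ) (a b : ℕ) (h : a ≤ b + 1) :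
    ∑ j ∈ Icc a b, (f j - f (j + 1)) = f a - f (b + 1) := by
  rw [← Finset.Ico_add_one_right_eq_Icc, Finset.sum_Ico_eq_sum_range]
  have := Finset.sum_range_sub' (fun i => f (a + i)) (b + 1 - a)
  simp only [add_zero] at this
  calc ∑ i ∈ range (b + 1 - a), (f (a + i) - f (a + i + 1))
      = ∑ i ∈ range (b + 1 - a), ((fun i => f (a + i)) i - (fun i => f (a + i)) (i + 1)) := by
        apply Finset.sum_congr rfl; intro i _; rw [Nat.add_assoc]
    _ = f (a + 0) - f (a + (b + 1 - a)) := Finset.sum_range_sub' _ _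
    _ = f a - f (b + 1) := by rw [add_zero]; congr 2; omega

/-- Copson's inequality (p = 2): `∑_{d=1}^N (∑_{t=d}^N c_t)² ≤ 4 ∑_{t=1}^N t² c_t²`. -/
lemma copson_aux (c : ℕ → ℝ) (hc : ∀ k, 0 ≤ c k) (N : ℕ) :
    ∑ d ∈ Icc 1 N, (∑ t ∈ Icc d N, c t) ^ 2 ≤ 4 * ∑ t ∈ Icc 1 N, (t : ℝ) ^ 2 * c t ^ 2 := by
  set R : ℕ → ℝ := fun d => ∑ t ∈ Icc d N, c t with hR
  have hRnonneg : ∀ d, 0 ≤ R d := fun d => Finset.sum_nonneg fun t _ => hc t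
  have hRtop : R (N + 1) = 0 := by
    simp [hR, Finset.Icc_eq_empty_of_lt (Nat.lt_succ_self N)]
  have hRrec : ∀ d, d ≤ N → R d = c d + R (d + 1) := by
    intro d hd
    have : Icc d N = insert d (Icc (d + 1) N) := by
      ext x; simp only [mem_Icc, mem_insert]; omega
    rw [hR]
    simp only [this]
    rw [Finset.sum_insert (by simp only [mem_Icc]; omega)]
  set A : ℝ := ∑ d ∈ Icc 1 N, R d ^ 2 with hA
  set B : ℝ := ∑ t ∈ Icc 1 N, (t : ℝ) ^ 2 * c t ^ 2 with hB
  have hAnonneg : 0 ≤ A := Finset.sum_nonneg fun d _ => sq_nonneg _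
  have hBnonneg : 0 ≤ B :=
    Finset.sum_nonneg fun t _ => mul_nonneg (sq_nonneg _) (sq_nonneg _)
  -- Abel summation: A = ∑ j ∈ Icc 1 N, j * (R j ^ 2 - R (j+1) ^ 2)
  have habel : A = ∑ j ∈ Icc 1 N, (j : ℝ) * (R j ^ 2 - R (j + 1) ^ 2) := by
    have h1 : ∀ d ∈ Icc 1 N, R d ^ 2 = ∑ j ∈ Icc d N, (R j ^ 2 - R (j + 1) ^ 2) := by
      intro d hd
      rw [mem_Icc] at hd
      rw [tel_Icc (fun j => R j ^ 2) d N (by omega), hRtop]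
      ring
    rw [hA, Finset.sum_congr rfl h1]
    rw [Finset.sum_comm' (t' := Icc 1 N) (s' := fun j => Icc 1 j)
      (by intro x y; simp only [mem_Icc]; omega)]
    apply Finset.sum_congr rfl
    intro j hj
    rw [Finset.sum_const, Nat.card_Icc]
    simp [nsmul_eq_mul]
  -- pointwise bound
  have hstep : A ≤ ∑ j ∈ Icc 1 N, 2 * ((j : ℝ) * c j) * R j := by
    rw [habel]
    apply Finset.sum_le_sum
    intro j hj
    rw [mem_Icc] at hj
    have hrec := hRrec j hj.2
    have h1 : R j ^ 2 - R (j + 1) ^ 2 ≤ 2 * c j * R j := by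
      have := hRnonneg (j + 1)
      have := hc j
      nlinarith [sq_nonneg (c j)]
    have hj0 : (0 : ℝ) ≤ (j : ℝ) := Nat.cast_nonneg j
    calc (j : ℝ) * (R j ^ 2 - R (j + 1) ^ 2) ≤ (j : ℝ) * (2 * c j * R j) :=
          mul_le_mul_of_nonneg_left h1 hj0
      _ = 2 * ((j : ℝ) * c j) * R j := by ring
  -- Cauchy-Schwarz
  have hcs : (∑ j ∈ Icc 1 N, ((j : ℝ) * c j) * R j) ^ 2 ≤ B * A := by
    have := Finset.sum_mul_sq_le_sq_mul_sq (Icc 1 N) (fun j => (j : ℝ) * c j) R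
    calc (∑ j ∈ Icc 1 N, ((j : ℝ) * c j) * R j) ^ 2
        ≤ (∑ j ∈ Icc 1 N, ((j : ℝ) * c j) ^ 2) * ∑ j ∈ Icc 1 N, R j ^ 2 := this
      _ = B * A := by rw [hA, hB]; congr 1; apply Finset.sum_congr rfl; intro j _; ring
  have hXnonneg : 0 ≤ ∑ j ∈ Icc 1 N, ((j : ℝ) * c j) * R j :=
    Finset.sum_nonneg fun j _ => mul_nonneg (mul_nonneg (Nat.cast_nonneg j) (hc j)) (hRnonneg j)
  set X : ℝ := ∑ j ∈ Icc 1 N, ((j : ℝ) * c j) * R j with hX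
  have hAX : A ≤ 2 * X := by
    calc A ≤ ∑ j ∈ Icc 1 N, 2 * ((j : ℝ) * c j) * R j := hstep
      _ = 2 * X := by rw [hX, Finset.mul_sum]; apply Finset.sum_congr rfl; intro j _; ring
  -- conclude A ≤ 4B
  nlinarith [hcs, hAX, hAnonneg, hBnonneg, hXnonneg]

/-- Lemma 2.1 (ii): if `∑ k²c_k² < ∞`-partial sums `V_N = 2∑_{k=1}^N k²c_k²` are
slowly varying (Karamata) and diverge, then
`(N+1)·∑_{s≥N+1, 1≤t≤N, s−t≤N} c_s·c_t = o(V_N)`. -/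
theorem offdiag_sum_isLittleO_two
    (c : ℕ → ℝ) (hc : ∀ k, 0 ≤ c k)
    (V : ℕ → ℝ) (hV : ∀ N, V N = 2 * ∑ k ∈ Icc 1 N, (k : ℝ) ^ 2 * c k ^ 2)
    (hslow : ∀ l : ℝ, 0 < l →
      Tendsto (fun N : ℕ => V ⌊l * N⌋₊ / V N) atTop (nhds 1))
    (hdiv : Tendsto V atTop atTop) :
    (fun N : ℕ => ((N : ℝ) + 1) * ∑ s ∈ Icc (N + 1) (2 * N), ∑ t ∈ Icc 1 N,
        if s ≤ N + t then c s * c t else 0) =o[atTop] V := by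
  -- slow variation at l = 2
  have h2 : Tendsto (fun N : ℕ => V (2 * N) / V N) atTop (nhds 1) := by
    have h := hslow 2 (by norm_num)
    have he : ∀ N : ℕ, ⌊(2 : ℝ) * N⌋₊ = 2 * N := by
      intro N
      rw [show (2 : ℝ) * N = ((2 * N : ℕ) : ℝ) by push_cast; ring, Nat.floor_natCast]
    simpa only [he] using h
  rw [Asymptotics.isLittleO_iff]
  intro ε hε
  have hVup : ∀ᶠ N : ℕ in atTop, 1 ≤ V N := hdiv.eventually_ge_atTop 1
  have hratio : ∀ᶠ N : ℕ in atTop, V (2 * N) / V N < 1 + ε ^ 2 :=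
    h2.eventually_lt_const (by nlinarith)
  filter_upwards [hVup, hratio] with N hV1 hr
  have hVpos : 0 < V N := lt_of_lt_of_le one_pos hV1
  -- the inner double sum
  set S : ℝ := ∑ s ∈ Icc (N + 1) (2 * N), ∑ t ∈ Icc 1 N,
      if s ≤ N + t then c s * c t else 0 with hSdef
  set R : ℕ → ℝ := fun d => ∑ t ∈ Icc d N, c t with hRdef
  have hRnonneg : ∀ d, 0 ≤ R d := fun d => Finset.sum_nonneg fun t _ => hc t
  -- Step A: reindex
  have hS : S = ∑ d ∈ Icc 1 N, c (N + d) * R d := by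
    rw [hSdef, show 2 * N = N + N by ring, ← map_add_left_Icc 1 N N, Finset.sum_map]
    apply Finset.sum_congr rfl
    intro d hd
    rw [mem_Icc] at hd
    simp only [addLeftEmbedding_apply]
    have hsub : Icc d N ⊆ Icc 1 N := Finset.Icc_subset_Icc hd.1 le_rfl
    rw [hRdef, Finset.mul_sum]
    rw [← Finset.sum_subset hsub (fun t ht hnt => ?_)]
    · apply Finset.sum_congr rfl
      intro t ht
      rw [mem_Icc] at ht
      rw [if_pos (by omega)]
    · rw [mem_Icc] at ht hnt
      push_neg at hnt
      rw [if_neg (by omega)]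
  have hSnonneg : 0 ≤ S := by
    rw [hS]
    exact Finset.sum_nonneg fun d _ => mul_nonneg (hc _) (hRnonneg d)
  -- Step B: Cauchy-Schwarz
  have hcs : S ^ 2 ≤ (∑ d ∈ Icc 1 N, c (N + d) ^ 2) * ∑ d ∈ Icc 1 N, R d ^ 2 := by
    rw [hS]
    exact Finset.sum_mul_sq_le_sq_mul_sq _ _ _
  -- Step C: tail bound
  have htail : ((N : ℝ) + 1) ^ 2 * ∑ d ∈ Icc 1 N, c (N + d) ^ 2 ≤ (V (2 * N) - V N) / 2 := by
    have hsplit : V (2 * N) - V N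
        = 2 * ∑ s ∈ Icc (N + 1) (2 * N), (s : ℝ) ^ 2 * c s ^ 2 := by
      rw [hV (2 * N), hV N, ← mul_sub]
      congr 1
      have h1 : Icc 1 (2 * N) = Ioc 0 (2 * N) := by rw [← Finset.Icc_add_one_left_eq_Ioc]; rfl
      have h2 : Icc 1 N = Ioc 0 N := by rw [← Finset.Icc_add_one_left_eq_Ioc]; rfl
      have h3 : Icc (N + 1) (2 * N) = Ioc N (2 * N) := by rw [← Finset.Icc_add_one_left_eq_Ioc]
      rw [h1, h2, h3, ← Finset.sum_Ioc_consecutive _ (Nat.zero_le N) (by omega)]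
      ring
    have hre : ∑ s ∈ Icc (N + 1) (2 * N), (s : ℝ) ^ 2 * c s ^ 2
        = ∑ d ∈ Icc 1 N, ((N + d : ℕ) : ℝ) ^ 2 * c (N + d) ^ 2 := by
      rw [show 2 * N = N + N by ring, ← map_add_left_Icc 1 N N, Finset.sum_map]
      simp [addLeftEmbedding_apply]
    have hle : ∑ d ∈ Icc 1 N, ((N : ℝ) + 1) ^ 2 * c (N + d) ^ 2
        ≤ ∑ d ∈ Icc 1 N, ((N + d : ℕ) : ℝ) ^ 2 * c (N + d) ^ 2 := by
      apply Finset.sum_le_sum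
      intro d hd
      rw [mem_Icc] at hd
      have h1 : ((N : ℝ) + 1) ≤ ((N + d : ℕ) : ℝ) := by
        push_cast
        have : (1 : ℝ) ≤ (d : ℝ) := by exact_mod_cast hd.1
        linarith
      have h2 : ((N : ℝ) + 1) ^ 2 ≤ ((N + d : ℕ) : ℝ) ^ 2 := by
        nlinarith [Nat.cast_nonneg (α := ℝ) N]
      exact mul_le_mul_of_nonneg_right h2 (sq_nonneg _)
    calc ((N : ℝ) + 1) ^ 2 * ∑ d ∈ Icc 1 N, c (N + d) ^ 2
        = ∑ d ∈ Icc 1 N, ((N : ℝ) + 1) ^ 2 * c (N + d) ^ 2 := Finset.mul_sum _ _ _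
      _ ≤ ∑ d ∈ Icc 1 N, ((N + d : ℕ) : ℝ) ^ 2 * c (N + d) ^ 2 := hle
      _ = ∑ s ∈ Icc (N + 1) (2 * N), (s : ℝ) ^ 2 * c s ^ 2 := hre.symm
      _ = (V (2 * N) - V N) / 2 := by rw [hsplit]; ring
  -- Step D: Copson
  have hcop : ∑ d ∈ Icc 1 N, R d ^ 2 ≤ 2 * V N := by
    have := copson_aux c hc N
    rw [hV N]
    calc ∑ d ∈ Icc 1 N, R d ^ 2 ≤ 4 * ∑ t ∈ Icc 1 N, (t : ℝ) ^ 2 * c t ^ 2 := this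
      _ = 2 * (2 * ∑ k ∈ Icc 1 N, (k : ℝ) ^ 2 * c k ^ 2) := by ring
  -- combine
  have hmono : V N ≤ V (2 * N) := by
    rw [hV N, hV (2 * N)]
    have hsub : Icc 1 N ⊆ Icc 1 (2 * N) := Finset.Icc_subset_Icc le_rfl (by omega)
    have := Finset.sum_le_sum_of_subset_of_nonneg hsub
      (fun k _ _ => mul_nonneg (sq_nonneg ((k : ℝ))) (sq_nonneg (c k)))
    linarith
  have hdiff : V (2 * N) - V N ≤ ε ^ 2 * V N := by
    rw [div_lt_iff₀ hVpos] at hr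
    nlinarith
  have hterm : 0 ≤ ∑ d ∈ Icc 1 N, c (N + d) ^ 2 :=
    Finset.sum_nonneg fun d _ => sq_nonneg _
  have hRsq : 0 ≤ ∑ d ∈ Icc 1 N, R d ^ 2 := Finset.sum_nonneg fun d _ => sq_nonneg _
  have hNpos : (0 : ℝ) < (N : ℝ) + 1 := by positivity
  have hkey : (((N : ℝ) + 1) * S) ^ 2 ≤ ε ^ 2 * V N ^ 2 := by
    have h1 : (((N : ℝ) + 1) * S) ^ 2
        = (((N : ℝ) + 1) ^ 2 * ∑ d ∈ Icc 1 N, c (N + d) ^ 2) *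
            (∑ d ∈ Icc 1 N, R d ^ 2)
          + ((N : ℝ) + 1) ^ 2 * (S ^ 2 -
            (∑ d ∈ Icc 1 N, c (N + d) ^ 2) * ∑ d ∈ Icc 1 N, R d ^ 2) := by ring
    have h2 : (((N : ℝ) + 1) * S) ^ 2
        ≤ (((N : ℝ) + 1) ^ 2 * ∑ d ∈ Icc 1 N, c (N + d) ^ 2) * ∑ d ∈ Icc 1 N, R d ^ 2 := by
      rw [h1]
      nlinarith [hcs, sq_nonneg ((N : ℝ) + 1)]
    have h3 : (((N : ℝ) + 1) ^ 2 * ∑ d ∈ Icc 1 N, c (N + d) ^ 2) * ∑ d ∈ Icc 1 N, R d ^ 2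
        ≤ ((V (2 * N) - V N) / 2) * (2 * V N) := by
      apply mul_le_mul htail hcop hRsq
      nlinarith [hterm, sq_nonneg ((N : ℝ) + 1), htail]
    have h4 : ((V (2 * N) - V N) / 2) * (2 * V N) = (V (2 * N) - V N) * V N := by ring
    nlinarith [hdiff, hVpos]
  -- conclude
  have hfinal : ((N : ℝ) + 1) * S ≤ ε * V N := by
    nlinarith [hkey, mul_nonneg hNpos.le hSnonneg, mul_pos hε hVpos]
  rw [Real.norm_eq_abs, Real.norm_eq_abs, abs_of_nonneg (mul_nonneg hNpos.le hSnonneg),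
    abs_of_nonneg hVpos.le]
  exact hfinal
end

section
/- Let (c_k)_{k≥1} be nonnegative reals with V_N = 2·∑_{k=1}^N k²c_k² slowly varying (Karamata) and V_N → ∞. Then N·∑_{s,t ≥ N, |s−t| ≤ N−1} c_s·c_t = o(V_N) as N → ∞. -/
/-!
By AM-GM, `c s * c t ≤ (c s ^ 2 + c t ^ 2) / 2`, and each `s` has fewer than `2N` partners
`t` in the band `|s - t| ≤ N - 1`, so `N · ∑ c_s c_t ≤ 2 N² ∑_{s ≥ N} c_s²`. Split the last sum
at `2^J N`. On `[N, 2^J N)` we have `N² c_s² ≤ s² c_s²`, so this part is at most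
`V(2^J N) - V(N - 1) = o(V N)` by slow variation. Beyond `2^J N`, on the dyadic block
`[2^j N, 2^(j+1) N)` one has `N² c_s² ≤ 4^(-j) s² c_s²`, and slow variation gives the doubling
bound `V(2M) ≤ 2 V(M)` for large `M`; the blocks thus contribute at most `2^(-j) V N`, summing to
`O(2^(-J)) V N`.
-/

open Filter Finset Topology Asymptotics

noncomputable def secondMomentSum (a : ℕ → ℝ) (n : ℕ) : ℝ :=
  ∑ k ∈ Icc 1 n, (k : ℝ) ^ 2 * a k

namespace secondMomentSum

variable {a : ℕ → ℝ}

theorem eq_sum_Ioc (n : ℕ) :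
    secondMomentSum a n = ∑ k ∈ Ioc 0 n, (k : ℝ) ^ 2 * a k := by
  rw [secondMomentSum, ← Finset.Icc_add_one_left_eq_Ioc, zero_add]

theorem nonneg (ha : ∀ k, 0 ≤ a k) (n : ℕ) : 0 ≤ secondMomentSum a n :=
  sum_nonneg fun k _ => mul_nonneg (sq_nonneg _) (ha k)

theorem mono (ha : ∀ k, 0 ≤ a k) : Monotone (secondMomentSum a) := fun _ _ hmn =>
  sum_le_sum_of_subset_of_nonneg (Icc_subset_Icc_right hmn)
    fun k _ _ => mul_nonneg (sq_nonneg _) (ha k)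

theorem sq_mul_sum_Ico_le (ha : ∀ k, 0 ≤ a k) {n P : ℕ} (hn : 0 < n) (hnP : n ≤ P) :
    (n : ℝ) ^ 2 * ∑ s ∈ Ico n P, a s ≤ secondMomentSum a P - secondMomentSum a (n - 1) := by
  rw [eq_sum_Ioc, eq_sum_Ioc, ← sum_Ioc_consecutive _ (Nat.zero_le _) (by omega : n - 1 ≤ P),
    add_sub_cancel_left, mul_sum]
  calc ∑ s ∈ Ico n P, (n : ℝ) ^ 2 * a s ≤ ∑ s ∈ Ico n P, (s : ℝ) ^ 2 * a s :=
        sum_le_sum fun s hs => by gcongr; exacts [ha s, (mem_Ico.mp hs).1]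
    _ ≤ ∑ s ∈ Ioc (n - 1) P, (s : ℝ) ^ 2 * a s :=
        sum_le_sum_of_subset_of_nonneg (fun s hs => by simp only [mem_Ico, mem_Ioc] at hs ⊢; omega)
          fun s _ _ => mul_nonneg (sq_nonneg _) (ha s)

theorem sq_mul_sum_Ico_dyadic_le (ha : ∀ k, 0 ≤ a k) {n : ℕ} (hn : 0 < n) (j : ℕ) :
    (n : ℝ) ^ 2 * ∑ s ∈ Ico (2 ^ j * n) (2 ^ (j + 1) * n), a s
      ≤ secondMomentSum a (2 ^ (j + 1) * n) / 4 ^ j := by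
  have h := sq_mul_sum_Ico_le ha (by positivity : 0 < 2 ^ j * n)
    (Nat.mul_le_mul_right n (Nat.pow_le_pow_right two_pos (Nat.le_add_right j 1)))
  rw [le_div_iff₀ (by positivity)]
  calc (n : ℝ) ^ 2 * (∑ s ∈ Ico (2 ^ j * n) (2 ^ (j + 1) * n), a s) * 4 ^ j
      = ((2 ^ j * n : ℕ) : ℝ) ^ 2 * ∑ s ∈ Ico (2 ^ j * n) (2 ^ (j + 1) * n), a s := by
        rw [show (4 : ℝ) = 2 ^ 2 by norm_num, ← pow_mul]; push_cast; ring
    _ ≤ secondMomentSum a (2 ^ (j + 1) * n) := by linarith [nonneg ha (2 ^ j * n - 1)]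

theorem sq_mul_sum_Ico_pow_two_le (ha : ∀ k, 0 ≤ a k) {n : ℕ} (hn : 0 < n)
    (hdouble : ∀ j, secondMomentSum a (2 ^ j * n) ≤ 2 ^ j * secondMomentSum a n) (J K : ℕ) :
    (n : ℝ) ^ 2 * ∑ s ∈ Ico (2 ^ J * n) (2 ^ (J + K) * n), a s
      ≤ (4 / 2 ^ J - 4 / 2 ^ (J + K)) * secondMomentSum a n := by
  induction K with
  | zero => simp
  | succ K ih =>
    have hblock : (n : ℝ) ^ 2 * ∑ s ∈ Ico (2 ^ (J + K) * n) (2 ^ (J + K + 1) * n), a s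
        ≤ (4 / 2 ^ (J + K) - 4 / 2 ^ (J + K + 1)) * secondMomentSum a n :=
      calc _ ≤ secondMomentSum a (2 ^ (J + K + 1) * n) / 4 ^ (J + K) :=
            sq_mul_sum_Ico_dyadic_le ha hn (J + K)
        _ ≤ 2 ^ (J + K + 1) * secondMomentSum a n / 4 ^ (J + K) := by gcongr; exact hdouble _
        _ = _ := by
            rw [show (4 : ℝ) = 2 ^ 2 by norm_num, ← pow_mul]
            field_simp
            ring
    rw [← add_assoc, ← sum_Ico_consecutive _ (Nat.mul_le_mul_right n
      (Nat.pow_le_pow_right two_pos (Nat.le_add_right J K)))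
      (Nat.mul_le_mul_right n (Nat.pow_le_pow_right two_pos (Nat.le_add_right _ 1))), mul_add]
    linarith

theorem sq_mul_sum_Ico_le_of_doubling (ha : ∀ k, 0 ≤ a k) {n : ℕ} (hn : 0 < n)
    (hdouble : ∀ j, secondMomentSum a (2 ^ j * n) ≤ 2 ^ j * secondMomentSum a n) (J M : ℕ) :
    (n : ℝ) ^ 2 * ∑ s ∈ Ico n M, a s
      ≤ secondMomentSum a (2 ^ J * n) - secondMomentSum a (n - 1)
        + 4 / 2 ^ J * secondMomentSum a n := by
  have hM : M ≤ 2 ^ (J + M) * n :=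
    calc M ≤ 2 ^ (J + M) := (Nat.lt_two_pow_self.trans_le
          (Nat.pow_le_pow_right two_pos (Nat.le_add_left M J))).le
      _ ≤ 2 ^ (J + M) * n := Nat.le_mul_of_pos_right _ hn
  have hnJ : n ≤ 2 ^ J * n := Nat.le_mul_of_pos_left n (by positivity)
  have hJM : 2 ^ J * n ≤ 2 ^ (J + M) * n :=
    Nat.mul_le_mul_right n (Nat.pow_le_pow_right two_pos (Nat.le_add_right J M))
  calc (n : ℝ) ^ 2 * ∑ s ∈ Ico n M, a s ≤ (n : ℝ) ^ 2 * ∑ s ∈ Ico n (2 ^ (J + M) * n), a s := by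
        gcongr
        exact fun s _ _ => ha s
    _ = (n : ℝ) ^ 2 * ∑ s ∈ Ico n (2 ^ J * n), a s
          + (n : ℝ) ^ 2 * ∑ s ∈ Ico (2 ^ J * n) (2 ^ (J + M) * n), a s := by
        rw [← mul_add, sum_Ico_consecutive _ hnJ hJM]
    _ ≤ _ := by
        have hdropped : 0 ≤ 4 / 2 ^ (J + M) * secondMomentSum a n :=
          mul_nonneg (by positivity) (nonneg ha n)
        linarith [sq_mul_sum_Ico_le ha hn hnJ, sq_mul_sum_Ico_pow_two_le ha hn hdouble J M]

end secondMomentSum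

theorem sum_sum_ite_mul_le_mul_sum_sq {ι : Type*} (T : Finset ι) (R : ι → ι → Prop)
    [DecidableRel R] (hR : ∀ s t, R s t → R t s) (x : ι → ℝ) (K : ℕ)
    (hK : ∀ s ∈ T, #{t ∈ T | R s t} ≤ K) :
    ∑ s ∈ T, ∑ t ∈ T, (if R s t then x s * x t else 0) ≤ K * ∑ s ∈ T, x s ^ 2 := by
  have hswap : ∑ s ∈ T, ∑ t ∈ T, (if R s t then x t ^ 2 else 0)
      = ∑ s ∈ T, ∑ t ∈ T, (if R s t then x s ^ 2 else 0) := by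
    rw [sum_comm]
    exact sum_congr rfl fun s _ => sum_congr rfl fun t _ => if_congr ⟨hR t s, hR s t⟩ rfl rfl
  calc ∑ s ∈ T, ∑ t ∈ T, (if R s t then x s * x t else 0)
      ≤ ∑ s ∈ T, ∑ t ∈ T,
          ((if R s t then x s ^ 2 else 0) + (if R s t then x t ^ 2 else 0)) / 2 := by
        gcongr with s _ t _
        split_ifs
        · linarith [two_mul_le_add_sq (x s) (x t)]
        · simp
    _ = ∑ s ∈ T, ∑ t ∈ T, (if R s t then x s ^ 2 else 0) := by
        simp only [← sum_div, sum_add_distrib, hswap]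
        ring
    _ = ∑ s ∈ T, #{t ∈ T | R s t} * x s ^ 2 := by
        simp only [← sum_filter, sum_const, nsmul_eq_mul]
    _ ≤ ∑ s ∈ T, K * x s ^ 2 := by
        gcongr with s hs
        exact_mod_cast hK s hs
    _ = K * ∑ s ∈ T, x s ^ 2 := (mul_sum _ _ _).symm

theorem mul_tsum_band_le {c : ℕ → ℝ} (hc : ∀ k, 0 ≤ c k) {N : ℕ} (hN : 0 < N) {B : ℝ}
    (hB : ∀ M, (N : ℝ) ^ 2 * ∑ s ∈ Ico N M, c s ^ 2 ≤ B) :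
    (N : ℝ) * ∑' p : ℕ × ℕ,
        (if N ≤ p.1 ∧ N ≤ p.2 ∧ p.1 ≤ p.2 + (N - 1) ∧ p.2 ≤ p.1 + (N - 1)
        then c p.1 * c p.2 else 0) ≤ 2 * B := by
  have hB0 : 0 ≤ B := by simpa using hB 0
  have hNpos : (0 : ℝ) < N := Nat.cast_pos.mpr hN
  rw [← le_div_iff₀' hNpos]
  refine tsum_le_of_sum_le' (by positivity) fun F => ?_
  set M := F.sup (fun p : ℕ × ℕ => max p.1 p.2) + 1
  have hFM : ∀ p ∈ F, p.1 < M ∧ p.2 < M := fun p hp => by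
    have := le_sup (f := fun p : ℕ × ℕ => max p.1 p.2) hp
    constructor <;> omega
  calc ∑ p ∈ F, (if N ≤ p.1 ∧ N ≤ p.2 ∧ p.1 ≤ p.2 + (N - 1) ∧ p.2 ≤ p.1 + (N - 1)
        then c p.1 * c p.2 else 0)
      = ∑ p ∈ F with N ≤ p.1 ∧ N ≤ p.2, (if N ≤ p.1 ∧ N ≤ p.2 ∧ p.1 ≤ p.2 + (N - 1) ∧
          p.2 ≤ p.1 + (N - 1) then c p.1 * c p.2 else 0) :=
        (sum_filter_of_ne fun p _ h => by
          by_contra hp; exact h (if_neg fun h' => hp ⟨h'.1, h'.2.1⟩)).symm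
    _ ≤ ∑ p ∈ Ico N M ×ˢ Ico N M, (if N ≤ p.1 ∧ N ≤ p.2 ∧ p.1 ≤ p.2 + (N - 1) ∧
          p.2 ≤ p.1 + (N - 1) then c p.1 * c p.2 else 0) := by
        refine sum_le_sum_of_subset_of_nonneg (fun p hp => ?_) fun p _ _ => ?_
        · rw [mem_filter] at hp
          have := hFM p hp.1
          simp only [mem_product, mem_Ico]
          omega
        · exact ite_nonneg (mul_nonneg (hc _) (hc _)) le_rfl
    _ = ∑ s ∈ Ico N M, ∑ t ∈ Ico N M,
          (if s ≤ t + (N - 1) ∧ t ≤ s + (N - 1) then c s * c t else 0) := by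
        rw [sum_product]
        refine sum_congr rfl fun s hs => sum_congr rfl fun t ht => if_congr ?_ rfl rfl
        simp only [mem_Ico] at hs ht
        simp [hs.1, ht.1]
    _ ≤ (2 * N : ℕ) * ∑ s ∈ Ico N M, c s ^ 2 := by
        refine sum_sum_ite_mul_le_mul_sum_sq _ _ (fun s t h => h.symm) c _ fun s _ => ?_
        calc #{t ∈ Ico N M | s ≤ t + (N - 1) ∧ t ≤ s + (N - 1)}
            ≤ #(Icc (s - (N - 1)) (s + (N - 1))) :=
              card_le_card fun t ht => by simp only [mem_filter, mem_Icc] at ht ⊢; omega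
          _ ≤ 2 * N := by simp only [Nat.card_Icc]; omega
    _ ≤ 2 * B / N := by
        rw [le_div_iff₀ hNpos]
        push_cast
        linear_combination 2 * hB M

def SlowlyVarying (V : ℕ → ℝ) : Prop :=
  ∀ l : ℝ, 0 < l → Tendsto (fun N : ℕ => V ⌊l * N⌋₊ / V N) atTop (𝓝 1)

namespace SlowlyVarying

variable {V : ℕ → ℝ}

theorem tendsto_mul (hV : SlowlyVarying V) {k : ℕ} (hk : 0 < k) :
    Tendsto (fun N : ℕ => V (k * N) / V N) atTop (𝓝 1) := by
  refine (hV k (Nat.cast_pos.mpr hk)).congr fun N => ?_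
  rw [← Nat.cast_mul, Nat.floor_natCast]

theorem tendsto_sub_one (hV : SlowlyVarying V) (hmono : Monotone V)
    (hpos : ∀ᶠ N in atTop, 0 < V N) :
    Tendsto (fun N : ℕ => V (N - 1) / V N) atTop (𝓝 1) := by
  have hhalf : Tendsto (fun N : ℕ => V (N / 2) / V N) atTop (𝓝 1) := by
    refine (hV (1 / 2) one_half_pos).congr fun N => ?_
    rw [one_div_mul_eq_div, ← Nat.cast_ofNat, Nat.floor_div_natCast, Nat.floor_natCast]
  refine tendsto_of_tendsto_of_tendsto_of_le_of_le' hhalf tendsto_const_nhds ?_ ?_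
  · filter_upwards [hpos, eventually_ge_atTop 2] with N hN h2
    gcongr
    exact hmono (by omega)
  · filter_upwards [hpos] with N hN
    exact div_le_one_of_le₀ (hmono (Nat.sub_le N 1)) hN.le

theorem isLittleO_sub (hV : SlowlyVarying V) (hmono : Monotone V)
    (hpos : ∀ᶠ N in atTop, 0 < V N) {k : ℕ} (hk : 0 < k) :
    (fun N : ℕ => V (k * N) - V (N - 1)) =o[atTop] V := by
  rw [isLittleO_iff_tendsto' (hpos.mono fun N hN h => absurd h hN.ne')]
  simpa [sub_div] using (hV.tendsto_mul hk).sub (hV.tendsto_sub_one hmono hpos)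

theorem pow_two_mul_le_of_forall_ge {N : ℕ} (hdouble : ∀ M ≥ N, V (2 * M) ≤ 2 * V M) (j : ℕ) :
    V (2 ^ j * N) ≤ 2 ^ j * V N := by
  induction j with
  | zero => simp
  | succ j ih =>
    calc V (2 ^ (j + 1) * N) = V (2 * (2 ^ j * N)) := by rw [pow_succ, mul_comm _ 2, mul_assoc]
      _ ≤ 2 * V (2 ^ j * N) := hdouble _ (Nat.le_mul_of_pos_left N (by positivity))
      _ ≤ 2 ^ (j + 1) * V N := by rw [pow_succ]; linarith

theorem eventually_pow_two_mul_le (hV : SlowlyVarying V) (hpos : ∀ᶠ N in atTop, 0 < V N) :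
    ∀ᶠ N in atTop, ∀ j, V (2 ^ j * N) ≤ 2 ^ j * V N := by
  have hdouble : ∀ᶠ M in atTop, V (2 * M) ≤ 2 * V M := by
    filter_upwards [(hV.tendsto_mul two_pos).eventually_lt_const one_lt_two, hpos] with M h hM
    exact ((div_lt_iff₀ hM).mp h).le
  filter_upwards [eventually_forall_ge_atTop.mpr hdouble] with N hN
  exact pow_two_mul_le_of_forall_ge hN

end SlowlyVarying

/-- Lemma 2.1 (iii): if `V_N = 2∑_{k=1}^N k²c_k²` is slowly varying (Karamata) and
diverges, then `N·∑_{s,t≥N, |s−t|≤N−1} c_s·c_t = o(V_N)`. -/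
theorem offdiag_sum_isLittleO_three
    (c : ℕ → ℝ) (hc : ∀ k, 0 ≤ c k)
    (V : ℕ → ℝ) (hV : ∀ N, V N = 2 * ∑ k ∈ Icc 1 N, (k : ℝ) ^ 2 * c k ^ 2)
    (hslow : ∀ l : ℝ, 0 < l →
      Tendsto (fun N : ℕ => V ⌊l * N⌋₊ / V N) atTop (nhds 1))
    (hdiv : Tendsto V atTop atTop) :
    (fun N : ℕ => (N : ℝ) * ∑' p : ℕ × ℕ,
        if N ≤ p.1 ∧ N ≤ p.2 ∧ p.1 ≤ p.2 + (N - 1) ∧ p.2 ≤ p.1 + (N - 1)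
        then c p.1 * c p.2 else 0) =o[atTop] V := by
  have hslowV : SlowlyVarying V := hslow
  have hVS : ∀ N, V N = 2 * secondMomentSum (fun k => c k ^ 2) N := hV
  have ha : ∀ k, 0 ≤ c k ^ 2 := fun k => sq_nonneg (c k)
  have hmono : Monotone V := fun m n h => by
    rw [hVS, hVS]; linarith [secondMomentSum.mono ha h]
  have hpos : ∀ᶠ N in atTop, 0 < V N := hdiv.eventually_gt_atTop 0
  refine isLittleO_iff.mpr fun ε hε => ?_
  obtain ⟨J, hJ⟩ : ∃ J : ℕ, 4 / 2 ^ J < ε / 2 := by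
    obtain ⟨J, hJ⟩ := exists_pow_lt_of_lt_one (by positivity : 0 < ε / 8) two_inv_lt_one
    exact ⟨J, by rw [inv_pow] at hJ; rw [div_eq_mul_inv]; linarith⟩
  filter_upwards [eventually_gt_atTop 0, hpos, hslowV.eventually_pow_two_mul_le hpos,
    (hslowV.isLittleO_sub hmono hpos (by positivity : 0 < 2 ^ J)).bound (half_pos hε)]
    with N hN hVN hdouble hsub
  have hband := mul_tsum_band_le hc hN (secondMomentSum.sq_mul_sum_Ico_le_of_doubling ha hN
    (fun j => by have h := hdouble j; rw [hVS, hVS] at h; linarith) J)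
  rw [Real.norm_of_nonneg hVN.le, Real.norm_eq_abs] at hsub
  rw [Real.norm_of_nonneg hVN.le, Real.norm_of_nonneg (mul_nonneg N.cast_nonneg
    (tsum_nonneg fun _ => ite_nonneg (mul_nonneg (hc _) (hc _)) le_rfl))]
  have hJV : 4 / 2 ^ J * V N ≤ ε / 2 * V N := by gcongr
  have hJS : 4 / 2 ^ J * V N = 2 * (4 / 2 ^ J * secondMomentSum (fun k => c k ^ 2) N) := by
    rw [hVS]; ring
  linarith [le_abs_self (V (2 ^ J * N) - V (N - 1)), hVS (2 ^ J * N), hVS (N - 1)]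
end

section
/- Let (V_N) be a nondecreasing positive sequence that is slowly varying in the sense of Karamata and diverges to infinity. Then ∑_{j=1}^∞ (1/j²)·(V_{jN} − V_N) = o(V_N) as N → ∞. -/
/-!
Slow variation at `λ = 2` gives `V (2N) ≤ c V N` for large `N`, with `c = 6/5`; iterating along
powers of two and using monotonicity yields the Potter-type bound `V (jN) ≤ c √j V N`, because
`c² ≤ 2`. Hence the normalized terms `j⁻² (V (jN) − V N) / V N` are dominated by the summable
`c j^(-3/2)`, uniformly in large `N`, while each of them tends to `0` by slow variation; Tannery's
theorem (dominated convergence for series) concludes.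
-/

open Filter Topology

namespace SlowVariation

variable {V : ℕ → ℝ}

noncomputable def normalizedTerm (V : ℕ → ℝ) (N j : ℕ) : ℝ :=
  1 / (j : ℝ) ^ 2 * (V (j * N) - V N) / V N

lemma tendsto_apply_natCast_mul_div
    (hslow : ∀ l : ℝ, 0 < l → Tendsto (fun N : ℕ => V ⌊l * N⌋₊ / V N) atTop (𝓝 1))
    {k : ℕ} (hk : 0 < k) : Tendsto (fun N => V (k * N) / V N) atTop (𝓝 1) := by
  simpa only [← Nat.cast_mul, Nat.floor_natCast] using hslow k (Nat.cast_pos.2 hk)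

lemma eventually_apply_two_mul_le (hpos : ∀ N, 0 < V N)
    (h2 : Tendsto (fun N => V (2 * N) / V N) atTop (𝓝 1)) {c : ℝ} (hc : 1 < c) :
    ∀ᶠ N in atTop, V (2 * N) ≤ c * V N := by
  filter_upwards [h2.eventually (eventually_le_nhds hc)] with N hN
  rwa [div_le_iff₀ (hpos N)] at hN

section Doubling

variable {c : ℝ} {N₀ N : ℕ} (hdouble : ∀ n ≥ N₀, V (2 * n) ≤ c * V n) (hN : N₀ ≤ N)
include hdouble hN

lemma apply_two_pow_mul_le (hc : 0 ≤ c) (k : ℕ) : V (2 ^ k * N) ≤ c ^ k * V N := by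
  induction k with
  | zero => simp
  | succ k ih =>
    calc V (2 ^ (k + 1) * N) = V (2 * (2 ^ k * N)) := by rw [pow_succ', mul_assoc]
      _ ≤ c * V (2 ^ k * N) := hdouble _ (hN.trans (Nat.le_mul_of_pos_left N (by positivity)))
      _ ≤ c * (c ^ k * V N) := mul_le_mul_of_nonneg_left ih hc
      _ = c ^ (k + 1) * V N := by ring

lemma apply_mul_le_mul_sqrt (hmono : Monotone V) (hVN : 0 ≤ V N) (hc : 0 ≤ c) (hc2 : c ^ 2 ≤ 2)
    {j : ℕ} (hj : 0 < j) : V (j * N) ≤ c * √j * V N := by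
  set L := Nat.log 2 j
  have hcL : c ^ L ≤ √j := by
    rw [Real.le_sqrt (by positivity) j.cast_nonneg, ← pow_mul, mul_comm, pow_mul]
    calc (c ^ 2) ^ L ≤ 2 ^ L := pow_le_pow_left₀ (sq_nonneg c) hc2 L
      _ ≤ j := by exact_mod_cast Nat.pow_log_le_self 2 hj.ne'
  calc V (j * N) ≤ V (2 ^ (L + 1) * N) :=
        hmono (Nat.mul_le_mul_right N (Nat.lt_pow_succ_log_self one_lt_two j).le)
    _ ≤ c ^ (L + 1) * V N := apply_two_pow_mul_le hdouble hN hc _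
    _ = c * c ^ L * V N := by ring
    _ ≤ c * √j * V N := by gcongr

lemma norm_normalizedTerm_le (hpos : ∀ n, 0 < V n) (hmono : Monotone V) (hc : 0 ≤ c)
    (hc2 : c ^ 2 ≤ 2) (j : ℕ) :
    ‖normalizedTerm V N j‖ ≤ c * (j : ℝ) ^ (-(3 / 2) : ℝ) := by
  rcases j.eq_zero_or_pos with rfl | hj
  · norm_num [normalizedTerm]
  have hj' : (0 : ℝ) < j := Nat.cast_pos.2 hj
  have hVN := hpos N
  have hgrowth := apply_mul_le_mul_sqrt hdouble hN hmono hVN.le hc hc2 hj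
  have hincr : V N ≤ V (j * N) := hmono (Nat.le_mul_of_pos_left N hj)
  have hsqrt : √j / (j : ℝ) ^ 2 = (j : ℝ) ^ (-(3 / 2) : ℝ) := by
    rw [Real.sqrt_eq_rpow, ← Real.rpow_natCast, ← Real.rpow_sub hj']
    norm_num
  unfold normalizedTerm
  rw [Real.norm_of_nonneg (by have := sub_nonneg.2 hincr; positivity), div_le_iff₀ hVN, ← hsqrt]
  calc 1 / (j : ℝ) ^ 2 * (V (j * N) - V N) ≤ 1 / (j : ℝ) ^ 2 * (c * √j * V N) := by
        gcongr; linarith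
    _ = c * (√j / (j : ℝ) ^ 2) * V N := by ring

end Doubling

lemma tendsto_normalizedTerm_zero (hpos : ∀ n, 0 < V n)
    (hslow : ∀ l : ℝ, 0 < l → Tendsto (fun N : ℕ => V ⌊l * N⌋₊ / V N) atTop (𝓝 1)) (j : ℕ) :
    Tendsto (normalizedTerm V · j) atTop (𝓝 0) := by
  unfold normalizedTerm
  rcases j.eq_zero_or_pos with rfl | hj
  · simp
  have hlim := ((tendsto_apply_natCast_mul_div hslow hj).sub_const 1).const_mul (1 / (j : ℝ) ^ 2)
  rw [sub_self, mul_zero] at hlim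
  refine hlim.congr fun N => ?_
  field_simp [(hpos N).ne']

end SlowVariation

open SlowVariation

theorem karamata_tail_series_isLittleO_general
    (V : ℕ → ℝ) (hpos : ∀ N, 0 < V N) (hmono : Monotone V)
    (hslow : ∀ l : ℝ, 0 < l →
      Tendsto (fun N : ℕ => V ⌊l * N⌋₊ / V N) atTop (nhds 1)) :
    (fun N : ℕ => ∑' j : ℕ, (1 / (j : ℝ) ^ 2) * (V (j * N) - V N)) =o[atTop] V := by
  obtain ⟨N₀, hdouble⟩ := eventually_atTop.1 <| eventually_apply_two_mul_le hpos
    (tendsto_apply_natCast_mul_div hslow two_pos) (by norm_num : (1 : ℝ) < 6 / 5)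
  rw [Asymptotics.isLittleO_iff_tendsto fun N h => absurd h (hpos N).ne']
  simp_rw [← tsum_div_const]
  rw [← tsum_zero]
  change Tendsto (fun N => ∑' j, normalizedTerm V N j) atTop _
  refine tendsto_tsum_of_dominated_convergence
    ((Real.summable_nat_rpow (p := -(3 / 2)).2 (by norm_num)).mul_left (6 / 5))
    (tendsto_normalizedTerm_zero hpos hslow) ?_
  filter_upwards [eventually_ge_atTop N₀] with N hN
  exact norm_normalizedTerm_le hdouble hN hpos hmono (by norm_num) (by norm_num)

/-- If `V` is a nondecreasing positive slowly varying (Karamata) sequence diverging to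
infinity, then `∑_{j≥1} (1/j²)·(V_{jN} − V_N) = o(V_N)` as `N → ∞`. -/
theorem karamata_tail_series_isLittleO
    (V : ℕ → ℝ) (hpos : ∀ N, 0 < V N) (hmono : Monotone V)
    (hslow : ∀ l : ℝ, 0 < l →
      Tendsto (fun N : ℕ => V ⌊l * N⌋₊ / V N) atTop (nhds 1))
    (hdiv : Tendsto V atTop atTop) :
    (fun N : ℕ => ∑' j : ℕ, (1 / (j : ℝ) ^ 2) * (V (j * N) - V N)) =o[atTop] V :=
  karamata_tail_series_isLittleO_general V hpos hmono hslow
end
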